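/- No quantum box gives rise to common certainty of disagreement. That is, for any n_A, n_B, n_X, n_Y ≥ 2, if p is a box with outputs in Fin n_A, Fin n_B and inputs in Fin n_X, Fin n_Y that is quantum, then p does not give rise to common certainty of disagreement. -/

import Mathlib

open Kronecker ComplexOrder

/-- A (bipartite) box: nonnegative entries, normalized for every input pair. -/
def IsBox {nA nB nX nY : ℕ} (p : Fin nA → Fin nB → Fin nX → Fin nY → ℝ) : Prop :=
  (∀ a b x y, 0 ≤ p a b x y) ∧ (∀ x y, (∑ a, ∑ b, p a b x y) = 1)

/-- No-signaling: each party's marginal does not depend on the other's input. -/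
def NoSignaling {nA nB nX nY : ℕ} (p : Fin nA → Fin nB → Fin nX → Fin nY → ℝ) : Prop :=
  (∀ b y x x', (∑ a, p a b x y) = ∑ a, p a b x' y) ∧
  (∀ a x y y', (∑ b, p a b x y) = ∑ b, p a b x y')

/-- Local (classical) box: a convex mixture of product deterministic/stochastic strategies. -/
def IsLocal {nA nB nX nY : ℕ} (p : Fin nA → Fin nB → Fin nX → Fin nY → ℝ) : Prop :=
  ∃ (Λ : ℕ) (w : Fin Λ → ℝ) (pA : Fin nA → Fin nX → Fin Λ → ℝ)
    (pB : Fin nB → Fin nY → Fin Λ → ℝ),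
    (∀ l, 0 ≤ w l) ∧ ((∑ l, w l) = 1) ∧
    (∀ a x l, 0 ≤ pA a x l) ∧ (∀ x l, (∑ a, pA a x l) = 1) ∧
    (∀ b y l, 0 ≤ pB b y l) ∧ (∀ y l, (∑ b, pB b y l) = 1) ∧
    (∀ a b x y, p a b x y = ∑ l, w l * pA a x l * pB b y l)

/-- Quantum box: realized by POVMs on a bipartite quantum state. -/
def IsQuantum {nA nB nX nY : ℕ} (p : Fin nA → Fin nB → Fin nX → Fin nY → ℝ) : Prop :=
  ∃ (dA dB : ℕ) (_ : 0 < dA) (_ : 0 < dB)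
    (ρ : Matrix (Fin dA × Fin dB) (Fin dA × Fin dB) ℂ)
    (E : Fin nX → Fin nA → Matrix (Fin dA) (Fin dA) ℂ)
    (F : Fin nY → Fin nB → Matrix (Fin dB) (Fin dB) ℂ),
    ρ.PosSemidef ∧ ρ.trace = 1 ∧
    (∀ x a, (E x a).PosSemidef) ∧ (∀ x, (∑ a, E x a) = 1) ∧
    (∀ y b, (F y b).PosSemidef) ∧ (∀ y, (∑ b, F y b) = 1) ∧
    (∀ a b x y, ((E x a ⊗ₖ F y b) * ρ).trace = (p a b x y : ℂ))

open Classical in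
/-- The certainty hierarchy `(α_n, β_n)` of the agreement framework:
`α₀` are Alice's outputs (on input `x = 0`) from which she assigns conditional
probability `qA` to Bob outputting `1` on input `y = 1`; `β₀` is the analogue
for Bob; and at each later stage each party is moreover certain (on inputs
`x = y = 0`) that the other's output lies in the previous stage's set. -/
noncomputable def alphaBeta {nA nB nX nY : ℕ} [NeZero nA] [NeZero nB] [NeZero nX] [NeZero nY]
    (p : Fin nA → Fin nB → Fin nX → Fin nY → ℝ) (qA qB : ℝ) :
    ℕ → Set (Fin nA) × Set (Fin nB)
  | 0 =>
      ({a | 0 < (∑ b, p a b 0 1) ∧ p a 1 0 1 = qA * (∑ b, p a b 0 1)},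
       {b | 0 < (∑ a, p a b 1 0) ∧ p 1 b 1 0 = qB * (∑ a, p a b 1 0)})
  | n + 1 =>
      ({a | a ∈ (alphaBeta p qA qB n).1 ∧ 0 < (∑ b, p a b 0 0) ∧
            (∑ b, if b ∈ (alphaBeta p qA qB n).2 then p a b 0 0 else 0) = ∑ b, p a b 0 0},
       {b | b ∈ (alphaBeta p qA qB n).2 ∧ 0 < (∑ a, p a b 0 0) ∧
            (∑ a, if a ∈ (alphaBeta p qA qB n).1 then p a b 0 0 else 0) = ∑ a, p a b 0 0})

open Fin.NatCast in
/-- The box gives rise to common certainty of disagreement: for some `qA ≠ qB` in `[0,1]`,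
the outputs on inputs `x = y = 1` are perfectly correlated, the event
`(a,b,x,y) = (0,0,0,0)` has positive probability, and `0 ∈ α_n`, `0 ∈ β_n` for every `n`. -/
def CommonCertaintyOfDisagreement {nA nB nX nY : ℕ}
    [NeZero nA] [NeZero nB] [NeZero nX] [NeZero nY]
    (p : Fin nA → Fin nB → Fin nX → Fin nY → ℝ) : Prop :=
  ∃ qA qB : ℝ, qA ∈ Set.Icc (0:ℝ) 1 ∧ qB ∈ Set.Icc (0:ℝ) 1 ∧ qA ≠ qB ∧
    (∀ a b, (a : ℕ) ≠ (b : ℕ) → p a b 1 1 = 0) ∧ 0 < p 0 0 0 0 ∧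
    (∀ n : ℕ, (0 : Fin nA) ∈ (alphaBeta p qA qB n).1 ∧ (0 : Fin nB) ∈ (alphaBeta p qA qB n).2)

open Fin.NatCast in
/-- The box gives rise to singular disagreement: perfectly correlated outputs on inputs
`x = y = 1`, positive probability of `(0,0,0,0)`, Alice assigns conditional probability
`qA = 1` to `b = 1` given `a = 0, x = 0, y = 1`, and Bob assigns conditional probability
`qB = 0` to `a = 1` given `b = 0, x = 1, y = 0`. -/
def SingularDisagreement {nA nB nX nY : ℕ}
    [NeZero nA] [NeZero nB] [NeZero nX] [NeZero nY]
    (p : Fin nA → Fin nB → Fin nX → Fin nY → ℝ) : Prop :=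
  (∀ a b, (a : ℕ) ≠ (b : ℕ) → p a b 1 1 = 0) ∧ 0 < p 0 0 0 0 ∧
  (0 < ∑ b, p 0 b 0 1) ∧ (p 0 1 0 1 = ∑ b, p 0 b 0 1) ∧
  (0 < ∑ a, p a 0 1 0) ∧ (p 1 0 1 0 = 0)

/-!
The certainty hierarchy `(α_n, β_n)` is a decreasing sequence of subsets of finite sets, so it
becomes stationary at some `(A, B)` with `0 ∈ A`. Stationarity says that on inputs `(0, 0)` the
event `a ∈ A` coincides almost surely with `b ∈ B`, and perfect correlation says that on inputs
`(1, 1)` the event `a = 1` coincides with `b = 1`. In a quantum realization an almost-sure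
coincidence of events becomes an operator identity `(P ⊗ 1) ρ = (1 ⊗ Q) ρ`, since an effect with
zero probability annihilates `ρ`. Combining the two identities (and moving one factor to the
other side of `ρ` by taking adjoints) gives `Pr(a ∈ A, b = 1 | 0, 1) = Pr(a = 1, b ∈ B | 1, 0)`
and `Pr(a ∈ A | x = 0) = Pr(b ∈ B | y = 0) > 0`. By the definition of `α₀` and `β₀` the two
sides of the first equation are `qA · Pr(a ∈ A)` and `qB · Pr(b ∈ B)`, so `qA = qB`.
-/

namespace Matrix

section Kronecker

variable {ι l m n p α : Type*} [NonUnitalNonAssocSemiring α]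

theorem sum_kronecker (s : Finset ι) (A : ι → Matrix l m α) (B : Matrix n p α) :
    (∑ i ∈ s, A i) ⊗ₖ B = ∑ i ∈ s, A i ⊗ₖ B :=
  map_sum (⟨⟨(· ⊗ₖ B), zero_kronecker B⟩, (add_kronecker · · B)⟩ :
    Matrix l m α →+ Matrix (l × n) (m × p) α) A s

theorem kronecker_sum (s : Finset ι) (A : Matrix l m α) (B : ι → Matrix n p α) :
    A ⊗ₖ (∑ i ∈ s, B i) = ∑ i ∈ s, A ⊗ₖ B i :=
  map_sum (⟨⟨(A ⊗ₖ ·), kronecker_zero A⟩, kronecker_add A⟩ :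
    Matrix n p α →+ Matrix (l × n) (m × p) α) B s

end Kronecker

open scoped MatrixOrder in
theorem PosSemidef.mul_eq_zero_of_trace_mul_eq_zero {n 𝕜 : Type*} [Fintype n] [DecidableEq n]
    [RCLike 𝕜] {M ρ : Matrix n n 𝕜} (hM : M.PosSemidef) (hρ : ρ.PosSemidef)
    (h : (M * ρ).trace = 0) : M * ρ = 0 := by
  obtain ⟨A, rfl⟩ := CStarAlgebra.nonneg_iff_eq_star_mul_self.mp hM.nonneg
  obtain ⟨B, rfl⟩ := CStarAlgebra.nonneg_iff_eq_star_mul_self.mp hρ.nonneg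
  simp only [star_eq_conjTranspose] at h ⊢
  -- `(Aᴴ * A * (Bᴴ * B)).trace` is the squared Frobenius norm of `A * Bᴴ`.
  have hAB : A * Bᴴ = 0 := by
    rw [← trace_mul_conjTranspose_self_eq_zero_iff, ← h, trace_mul_comm (Aᴴ * A),
      conjTranspose_mul, conjTranspose_conjTranspose, Matrix.mul_assoc, trace_mul_comm A]
    simp only [Matrix.mul_assoc]
  rw [Matrix.mul_assoc, ← Matrix.mul_assoc A, hAB, Matrix.zero_mul, Matrix.mul_zero]

section Bipartite

variable {ιA ιB dA dB R : Type*} [Fintype dA] [Fintype dB] {ρ : Matrix (dA × dB) (dA × dB) R}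

section Semiring

variable [Semiring R] {E : ιA → Matrix dA dA R} {F : ιB → Matrix dB dB R}
  {S : Finset ιA} {T : Finset ιB}

theorem sum_kronecker_one_mul [Fintype ιB] [DecidableEq dB] (hF : ∑ b, F b = 1)
    (h : ∀ a ∈ S, ∀ b ∉ T, (E a ⊗ₖ F b) * ρ = 0) :
    ((∑ a ∈ S, E a) ⊗ₖ 1) * ρ = ∑ a ∈ S, ∑ b ∈ T, (E a ⊗ₖ F b) * ρ := by
  rw [← hF, sum_kronecker, Finset.sum_mul]
  refine Finset.sum_congr rfl fun a ha => ?_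
  rw [kronecker_sum, Finset.sum_mul,
    Finset.sum_subset (Finset.subset_univ T) fun b _ hb => h a ha b hb]

theorem one_kronecker_sum_mul [Fintype ιA] [DecidableEq dA] (hE : ∑ a, E a = 1)
    (h : ∀ b ∈ T, ∀ a ∉ S, (E a ⊗ₖ F b) * ρ = 0) :
    (1 ⊗ₖ (∑ b ∈ T, F b)) * ρ = ∑ a ∈ S, ∑ b ∈ T, (E a ⊗ₖ F b) * ρ := by
  rw [← hE, kronecker_sum, Finset.sum_mul, Finset.sum_comm]
  refine Finset.sum_congr rfl fun b hb => ?_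
  rw [sum_kronecker, Finset.sum_mul,
    Finset.sum_subset (Finset.subset_univ S) fun a _ ha => h b hb a ha]

theorem sum_kronecker_one_mul_eq_one_kronecker_sum_mul [Fintype ιA] [Fintype ιB]
    [DecidableEq dA] [DecidableEq dB] (hE : ∑ a, E a = 1) (hF : ∑ b, F b = 1)
    (h : ∀ a b, Xor (a ∈ S) (b ∈ T) → (E a ⊗ₖ F b) * ρ = 0) :
    ((∑ a ∈ S, E a) ⊗ₖ 1) * ρ = (1 ⊗ₖ (∑ b ∈ T, F b)) * ρ := by
  rw [sum_kronecker_one_mul hF fun a ha b hb => h a b (.inl ⟨ha, hb⟩),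
    one_kronecker_sum_mul hE fun b hb a ha => h a b (.inr ⟨hb, ha⟩)]

end Semiring

theorem trace_kronecker_mul_eq_of_kronecker_one_mul_eq [DecidableEq dA] [DecidableEq dB]
    [CommSemiring R] [StarRing R]
    {P E : Matrix dA dA R} {Q F : Matrix dB dB R} (hρ : ρ.IsHermitian) (hE : E.IsHermitian)
    (hF : F.IsHermitian) (hPQ : (P ⊗ₖ 1) * ρ = (1 ⊗ₖ Q) * ρ)
    (hEF : (E ⊗ₖ 1) * ρ = (1 ⊗ₖ F) * ρ) :
    ((P ⊗ₖ F) * ρ).trace = ((E ⊗ₖ Q) * ρ).trace := by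
  have hρEF : ρ * (E ⊗ₖ 1) = ρ * (1 ⊗ₖ F) := by
    simpa only [conjTranspose_mul, conjTranspose_kronecker, conjTranspose_one, hρ.eq, hE.eq,
      hF.eq] using congrArg conjTranspose hEF
  calc ((P ⊗ₖ F) * ρ).trace
      = ((1 ⊗ₖ F) * ((P ⊗ₖ 1) * ρ)).trace := by
        rw [← Matrix.mul_assoc, ← mul_kronecker_mul, Matrix.one_mul, Matrix.mul_one]
    _ = ((1 ⊗ₖ Q) * (ρ * (1 ⊗ₖ F))).trace := by
        rw [hPQ, trace_mul_comm, Matrix.mul_assoc]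
    _ = ((E ⊗ₖ 1) * ((1 ⊗ₖ Q) * ρ)).trace := by
        rw [← hρEF, ← Matrix.mul_assoc, trace_mul_comm]
    _ = ((E ⊗ₖ Q) * ρ).trace := by
        rw [← Matrix.mul_assoc, ← mul_kronecker_mul, Matrix.one_mul, Matrix.mul_one]

end Bipartite

end Matrix

theorem eq_zero_of_sum_ite_eq_sum {ι M : Type*} [Fintype ι] [AddCommMonoid M]
    [PartialOrder M] [IsOrderedCancelAddMonoid M] {s : Set ι} [DecidablePred (· ∈ s)]
    {f : ι → M} (hf : ∀ i, 0 ≤ f i) (h : ∑ i, (if i ∈ s then f i else 0) = ∑ i, f i) {i : ι}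
    (hi : i ∉ s) : f i = 0 := by
  have hle : ∀ j ∈ Finset.univ, (if j ∈ s then f j else 0) ≤ f j := fun j _ => by
    split_ifs
    exacts [le_rfl, hf j]
  simpa [hi] using ((Finset.sum_eq_sum_iff_of_le hle).1 h i (Finset.mem_univ i)).symm

section Box

variable {nA nB nX nY : ℕ}

def EventsCoincide (p : Fin nA → Fin nB → Fin nX → Fin nY → ℝ) (x : Fin nX) (y : Fin nY)
    (A : Finset (Fin nA)) (B : Finset (Fin nB)) : Prop :=
  ∀ a b, Xor (a ∈ A) (b ∈ B) → p a b x y = 0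

open Matrix in
theorem IsQuantum.sum_sum_eq_of_eventsCoincide {p : Fin nA → Fin nB → Fin nX → Fin nY → ℝ}
    (hq : IsQuantum p) {x x' : Fin nX} {y y' : Fin nY} {A A' : Finset (Fin nA)}
    {B B' : Finset (Fin nB)} (h : EventsCoincide p x y A B) (h' : EventsCoincide p x' y' A' B') :
    ∑ a ∈ A, ∑ b ∈ B', p a b x y' = ∑ a ∈ A', ∑ b ∈ B, p a b x' y := by
  obtain ⟨dA, dB, -, -, ρ, E, F, hρ, -, hE, hEsum, hF, hFsum, hp⟩ := hq
  have hvanish {x y S T} (hST : EventsCoincide p x y S T) (a b) (hab : Xor (a ∈ S) (b ∈ T)) :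
      (E x a ⊗ₖ F y b) * ρ = 0 :=
    ((hE x a).kronecker (hF y b)).mul_eq_zero_of_trace_mul_eq_zero hρ
      (by rw [hp, hST a b hab, Complex.ofReal_zero])
  have htrace (x y) (S : Finset (Fin nA)) (T : Finset (Fin nB)) :
      (((∑ a ∈ S, E x a) ⊗ₖ ∑ b ∈ T, F y b) * ρ).trace =
        ((∑ a ∈ S, ∑ b ∈ T, p a b x y : ℝ) : ℂ) := by
    rw [sum_kronecker]
    simp only [kronecker_sum, Finset.sum_mul, trace_sum, hp, Complex.ofReal_sum]
  apply Complex.ofReal_injective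
  rw [← htrace, ← htrace]
  exact trace_kronecker_mul_eq_of_kronecker_one_mul_eq hρ.isHermitian
    (isSelfAdjoint_sum A' fun a _ => (hE x' a).isHermitian)
    (isSelfAdjoint_sum B' fun b _ => (hF y' b).isHermitian)
    (sum_kronecker_one_mul_eq_one_kronecker_sum_mul (hEsum x) (hFsum y) (hvanish h))
    (sum_kronecker_one_mul_eq_one_kronecker_sum_mul (hEsum x') (hFsum y') (hvanish h'))

section

variable [NeZero nA] [NeZero nB] [NeZero nX] [NeZero nY]
  {p : Fin nA → Fin nB → Fin nX → Fin nY → ℝ} {qA qB : ℝ}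

theorem alphaBeta_antitone : Antitone (alphaBeta p qA qB) :=
  antitone_nat_of_succ_le fun _ => ⟨fun _ ha => ha.1, fun _ hb => hb.1⟩

theorem exists_alphaBeta_succ_eq : ∃ N, alphaBeta p qA qB (N + 1) = alphaBeta p qA qB N :=
  (WellFoundedLT.antitone_chain_condition alphaBeta_antitone).imp fun N hN =>
    (hN (N + 1) N.le_succ).symm

open Classical in
theorem eventsCoincide_of_alphaBeta_succ_eq (hp : ∀ a b x y, 0 ≤ p a b x y) {N : ℕ}
    (hN : alphaBeta p qA qB (N + 1) = alphaBeta p qA qB N) :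
    EventsCoincide p 0 0 (alphaBeta p qA qB N).1.toFinset (alphaBeta p qA qB N).2.toFinset := by
  rintro a b (⟨ha, hb⟩ | ⟨hb, ha⟩) <;> rw [Set.mem_toFinset] at ha hb
  · rw [← hN] at ha
    exact eq_zero_of_sum_ite_eq_sum (hp a · 0 0) ha.2.2 hb
  · rw [← hN] at hb
    exact eq_zero_of_sum_ite_eq_sum (hp · b 0 0) hb.2.2 ha

open Fin.NatCast in
theorem eventsCoincide_singleton_one (hA : 2 ≤ nA) (hB : 2 ≤ nB)
    (hcorr : ∀ a b, (a : ℕ) ≠ (b : ℕ) → p a b 1 1 = 0) : EventsCoincide p 1 1 {1} {1} := by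
  have hval : ∀ {a : Fin nA} {b : Fin nB}, Xor (a = 1) (b = 1) → (a : ℕ) ≠ b := by
    have h1A : ((1 : Fin nA) : ℕ) = 1 := by rw [Fin.val_one', Nat.mod_eq_of_lt hA]
    have h1B : ((1 : Fin nB) : ℕ) = 1 := by rw [Fin.val_one', Nat.mod_eq_of_lt hB]
    rintro a b (⟨rfl, hb⟩ | ⟨rfl, ha⟩)
    · rw [Fin.ext_iff, h1B] at hb
      omega
    · rw [Fin.ext_iff, h1A] at ha
      omega
  intro a b hab
  simpa using hcorr a b (hval (by simpa using hab))

end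

end Box

theorem quantum_no_ccd_general
    {nA nB nX nY : ℕ} [NeZero nA] [NeZero nB] [NeZero nX] [NeZero nY]
    (hA : 2 ≤ nA) (hB : 2 ≤ nB)
    (p : Fin nA → Fin nB → Fin nX → Fin nY → ℝ)
    (hbox : IsBox p) (hq : IsQuantum p) :
    ¬ CommonCertaintyOfDisagreement p := by
  classical
  rintro ⟨qA, qB, -, -, hne, hcorr, -, hmem⟩
  obtain ⟨N, hN⟩ := exists_alphaBeta_succ_eq (p := p) (qA := qA) (qB := qB)
  set A := (alphaBeta p qA qB N).1.toFinset
  set B := (alphaBeta p qA qB N).2.toFinset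
  have hα (a) (ha : a ∈ A) : a ∈ (alphaBeta p qA qB 0).1 :=
    (alphaBeta_antitone N.zero_le).1 (Set.mem_toFinset.1 ha)
  have hβ (b) (hb : b ∈ B) : b ∈ (alphaBeta p qA qB 0).2 :=
    (alphaBeta_antitone N.zero_le).2 (Set.mem_toFinset.1 hb)
  have hAB := eventsCoincide_of_alphaBeta_succ_eq hbox.1 hN
  have hagree := hq.sum_sum_eq_of_eventsCoincide hAB (eventsCoincide_singleton_one hA hB hcorr)
  have hmarg := hq.sum_sum_eq_of_eventsCoincide hAB (x' := 1) (y' := 1)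
    (A' := Finset.univ) (B' := Finset.univ) (by simp [EventsCoincide])
  have h0A : (0 : Fin nA) ∈ A := Set.mem_toFinset.2 (hmem N).1
  have hpos : 0 < ∑ a ∈ A, ∑ b, p a b 0 1 := (hα 0 h0A).1.trans_le <|
    Finset.single_le_sum (fun a _ => Finset.sum_nonneg fun b _ => hbox.1 a b 0 1) h0A
  refine hne (mul_right_cancel₀ hpos.ne' ?_)
  calc qA * ∑ a ∈ A, ∑ b, p a b 0 1
      = ∑ a ∈ A, p a 1 0 1 := by
        rw [Finset.mul_sum]
        exact Finset.sum_congr rfl fun a ha => (hα a ha).2.symm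
    _ = ∑ b ∈ B, p 1 b 1 0 := by simpa using hagree
    _ = qB * ∑ b ∈ B, ∑ a, p a b 1 0 := by
        rw [Finset.mul_sum]
        exact Finset.sum_congr rfl fun b hb => (hβ b hb).2
    _ = qB * ∑ a ∈ A, ∑ b, p a b 0 1 := by rw [hmarg, Finset.sum_comm]

/-- Theorem 5 of the paper: no quantum box (with any finite numbers of inputs and outputs)
gives rise to common certainty of disagreement. -/
theorem quantum_no_ccd
    {nA nB nX nY : ℕ} [NeZero nA] [NeZero nB] [NeZero nX] [NeZero nY]
    (hA : 2 ≤ nA) (hB : 2 ≤ nB) (hX : 2 ≤ nX) (hY : 2 ≤ nY)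
    (p : Fin nA → Fin nB → Fin nX → Fin nY → ℝ)
    (hbox : IsBox p) (hq : IsQuantum p) :
    ¬ CommonCertaintyOfDisagreement p :=
  quantum_no_ccd_general hA hB p hbox hq
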